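/- arXiv:0807.3235 — 9 statements merged into one kernel-verified Lean document; each statement's English description precedes it below -/
import Mathlib

section
/- Let U ⊆ ℝ^N be an open set, let Γ^α_{σβ} : U → ℝ be twice differentiable connection coefficients, and let F ∈ Matrix (Fin N) (Fin N) ℝ be a constant matrix. Suppose F is covariantly constant with respect to Γ, i.e. ∑_λ Γ^α_{σλ}(z) F^λ_β = ∑_ν Γ^ν_{σβ}(z) F^α_ν for all z ∈ U and all indices. Then the curvature tensor of Γ is pure with respect to one upper and one lower index: ∑_λ R^λ_{αβγ}(z) F^δ_λ = ∑_λ R^δ_{αβλ}(z) F^λ_γ for all z ∈ U and all indices α,β,γ,δ (equivalently, each curvature operator R(∂_α,∂_β) commutes with F). -/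
/-!
Write `A_σ` for the matrix `(Γ^α_{σβ})_{αβ}`. Covariant constancy of `F` says exactly that every
`A_σ(z)` commutes with `F`. Since this holds on the open set `U`, it can be differentiated, so
every directional derivative `∂_v A_σ(z)` commutes with `F` as well. The curvature operator
`R(∂_α, ∂_β) = ∂_α A_β - ∂_β A_α + A_α A_β - A_β A_α` is built from these matrices by sums,
differences and products, hence also commutes with `F`.
-/

/-- The curvature tensor of connection coefficients `Γ`:
`R^δ_{αβγ} = ∂_α Γ^δ_{βγ} − ∂_β Γ^δ_{αγ} + ∑_λ (Γ^δ_{αλ} Γ^λ_{βγ} − Γ^δ_{βλ} Γ^λ_{αγ})`,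
where `Γ z δ β γ = Γ^δ_{βγ}(z)`. -/
noncomputable def curvature {N : ℕ} (Γ : (Fin N → ℝ) → Fin N → Fin N → Fin N → ℝ)
    (z : Fin N → ℝ) (δ α β γ : Fin N) : ℝ :=
  fderiv ℝ (fun w => Γ w δ β γ) z (Pi.single α 1)
    - fderiv ℝ (fun w => Γ w δ α γ) z (Pi.single β 1)
    + ∑ μ, (Γ z δ α μ * Γ z μ β γ - Γ z δ β μ * Γ z μ α γ)

open Filter Topology

section MatrixDeriv

variable {𝕜 : Type*} [NontriviallyNormedField 𝕜] {E : Type*} [NormedAddCommGroup E]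
  [NormedSpace 𝕜 E] {n : Type*}

noncomputable def matrixDeriv (A : E → Matrix n n 𝕜) (z v : E) : Matrix n n 𝕜 :=
  Matrix.of fun i j => fderiv 𝕜 (fun w => A w i j) z v

lemma matrixDeriv_congr_of_eventuallyEq {A B : E → Matrix n n 𝕜} {z : E}
    (h : A =ᶠ[𝓝 z] B) (v : E) : matrixDeriv A z v = matrixDeriv B z v := by
  ext i j
  simp only [matrixDeriv, Matrix.of_apply]
  rw [Filter.EventuallyEq.fderiv_eq (h.mono fun w hw => congrFun (congrFun hw i) j)]

variable [Fintype n]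

lemma matrixDeriv_mul_const {A : E → Matrix n n 𝕜} {z : E}
    (hA : ∀ i j, DifferentiableAt 𝕜 (fun w => A w i j) z) (F : Matrix n n 𝕜) (v : E) :
    matrixDeriv (fun w => A w * F) z v = matrixDeriv A z v * F := by
  ext i j
  have h : HasFDerivAt (fun w => ∑ k, A w i k * F k j)
      (∑ k, F k j • fderiv 𝕜 (fun w => A w i k) z) z :=
    HasFDerivAt.fun_sum fun k _ => (hA i k).hasFDerivAt.mul_const (F k j)
  simp [matrixDeriv, Matrix.mul_apply, h.fderiv, mul_comm]

lemma matrixDeriv_const_mul {A : E → Matrix n n 𝕜} {z : E}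
    (hA : ∀ i j, DifferentiableAt 𝕜 (fun w => A w i j) z) (F : Matrix n n 𝕜) (v : E) :
    matrixDeriv (fun w => F * A w) z v = F * matrixDeriv A z v := by
  ext i j
  have h : HasFDerivAt (fun w => ∑ k, F i k * A w k j)
      (∑ k, F i k • fderiv 𝕜 (fun w => A w k j) z) z :=
    HasFDerivAt.fun_sum fun k _ => (hA k j).hasFDerivAt.const_mul (F i k)
  simp [matrixDeriv, Matrix.mul_apply, h.fderiv]

theorem commute_matrixDeriv {A : E → Matrix n n 𝕜} {z : E} {F : Matrix n n 𝕜}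
    (hA : ∀ i j, DifferentiableAt 𝕜 (fun w => A w i j) z)
    (hcomm : ∀ᶠ w in 𝓝 z, Commute (A w) F) (v : E) :
    Commute (matrixDeriv A z v) F := by
  have h : (fun w => A w * F) =ᶠ[𝓝 z] fun w => F * A w := hcomm.mono fun w hw => hw.eq
  have := matrixDeriv_congr_of_eventuallyEq h v
  rwa [matrixDeriv_mul_const hA, matrixDeriv_const_mul hA] at this

end MatrixDeriv

section Connection

variable {N : ℕ}

def connectionMatrix (Γ : (Fin N → ℝ) → Fin N → Fin N → Fin N → ℝ) (σ : Fin N)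
    (z : Fin N → ℝ) : Matrix (Fin N) (Fin N) ℝ :=
  Matrix.of fun α β => Γ z α σ β

noncomputable def curvatureMatrix (Γ : (Fin N → ℝ) → Fin N → Fin N → Fin N → ℝ)
    (z : Fin N → ℝ) (α β : Fin N) : Matrix (Fin N) (Fin N) ℝ :=
  matrixDeriv (connectionMatrix Γ β) z (Pi.single α 1)
    - matrixDeriv (connectionMatrix Γ α) z (Pi.single β 1)
    + (connectionMatrix Γ α z * connectionMatrix Γ β z
      - connectionMatrix Γ β z * connectionMatrix Γ α z)

lemma curvatureMatrix_apply (Γ : (Fin N → ℝ) → Fin N → Fin N → Fin N → ℝ)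
    (z : Fin N → ℝ) (α β δ γ : Fin N) :
    curvatureMatrix Γ z α β δ γ = curvature Γ z δ α β γ := by
  simp [curvatureMatrix, curvature, matrixDeriv, connectionMatrix, Matrix.mul_apply,
    Finset.sum_sub_distrib]

lemma commute_connectionMatrix_iff {Γ : (Fin N → ℝ) → Fin N → Fin N → Fin N → ℝ}
    {F : Matrix (Fin N) (Fin N) ℝ} {σ : Fin N} {z : Fin N → ℝ} :
    Commute (connectionMatrix Γ σ z) F ↔
      ∀ α β, ∑ μ, Γ z α σ μ * F μ β = ∑ ν, Γ z ν σ β * F α ν := by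
  simp only [Commute, SemiconjBy, ← Matrix.ext_iff, Matrix.mul_apply, connectionMatrix,
    Matrix.of_apply, mul_comm (F _ _)]

theorem commute_curvatureMatrix {Γ : (Fin N → ℝ) → Fin N → Fin N → Fin N → ℝ}
    {F : Matrix (Fin N) (Fin N) ℝ} {z : Fin N → ℝ}
    (hdiff : ∀ σ α β, DifferentiableAt ℝ (fun w => Γ w α σ β) z)
    (hcomm : ∀ᶠ w in 𝓝 z, ∀ σ, Commute (connectionMatrix Γ σ w) F) (α β : Fin N) :
    Commute (curvatureMatrix Γ z α β) F := by
  have hA : ∀ σ, Commute (connectionMatrix Γ σ z) F := hcomm.self_of_nhds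
  have hD : ∀ σ v, Commute (matrixDeriv (connectionMatrix Γ σ) z v) F := fun σ =>
    commute_matrixDeriv (hdiff σ) (hcomm.mono fun w hw => hw σ)
  exact ((hD β _).sub_left (hD α _)).add_left
    (((hA α).mul_left (hA β)).sub_left ((hA β).mul_left (hA α)))

end Connection

/-- If a constant (1,1)-tensor `F` is covariantly constant with
respect to twice differentiable connection coefficients `Γ`, then the curvature
tensor of `Γ` is pure with respect to one upper and one lower index:
`∑_λ R^λ_{αβγ} F^δ_λ = ∑_λ R^δ_{αβλ} F^λ_γ`. -/
theorem stmt_2 {N : ℕ} (U : Set (Fin N → ℝ)) (hUopen : IsOpen U)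
    (Γ : (Fin N → ℝ) → Fin N → Fin N → Fin N → ℝ)   -- Γ z α σ β = Γ^α_{σβ}(z)
    (hΓ : ∀ δ β γ, ContDiffOn ℝ 2 (fun z => Γ z δ β γ) U)
    (F : Matrix (Fin N) (Fin N) ℝ)                   -- F α β = F^α_β
    (hcov : ∀ z ∈ U, ∀ σ α β,
      ∑ μ, Γ z α σ μ * F μ β = ∑ ν, Γ z ν σ β * F α ν) :
    ∀ z ∈ U, ∀ α β γ δ,
      ∑ μ, curvature Γ z μ α β γ * F δ μ = ∑ μ, curvature Γ z δ α β μ * F μ γ := by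
  intro z hz α β γ δ
  have hU : U ∈ 𝓝 z := hUopen.mem_nhds hz
  have hdiff : ∀ σ a b, DifferentiableAt ℝ (fun w => Γ w a σ b) z := fun σ a b =>
    ((hΓ a σ b).differentiableOn two_ne_zero).differentiableAt hU
  have hcomm : ∀ᶠ w in 𝓝 z, ∀ σ, Commute (connectionMatrix Γ σ w) F :=
    eventually_of_mem hU fun w hw σ => commute_connectionMatrix_iff.2 (hcov w hw σ)
  have h := congrFun (congrFun (commute_curvatureMatrix hdiff hcomm α β).eq δ) γ
  simp only [Matrix.mul_apply, curvatureMatrix_apply] at h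
  simpa only [mul_comm (F _ _)] using h.symm
end

section
/- Let U ⊆ ℝ^N be an open set, F ∈ Matrix (Fin N) (Fin N) ℝ a constant matrix, and g : U → Matrix (Fin N) (Fin N) ℝ a smooth map with each g(z) symmetric and invertible, satisfying the purity condition Fᵀ * g(z) = g(z) * F for all z ∈ U. Let Γ^σ_{αβ} = ½ ∑_λ g^{σλ}(∂_α g_{βλ} + ∂_β g_{λα} − ∂_λ g_{αβ}) be the Christoffel symbols of the Levi-Civita connection of g. Then Γ is pure toward F with respect to all indices (i.e. ∑_λ F^λ_α Γ^σ_{λβ} = ∑_λ F^λ_β Γ^σ_{αλ} = ∑_λ F^σ_λ Γ^λ_{αβ} on U for all indices) if and only if the partial derivatives of g are pure toward F, i.e. ∑_λ F^λ_σ ∂_λ g_{αβ} = ∑_λ F^λ_α ∂_σ g_{λβ} on U for all indices σ, α, β. -/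
open Matrix

/-- The partial derivative in the `σ`-th coordinate direction. -/
noncomputable def pd {N : ℕ} (σ : Fin N) (h : (Fin N → ℝ) → ℝ) (z : Fin N → ℝ) : ℝ :=
  fderiv ℝ h z (Pi.single σ 1)

/-- The Christoffel symbols of the Levi-Civita connection of a metric `g`:
`Γ^σ_{αβ} = ½ ∑_λ g^{σλ} (∂_α g_{βλ} + ∂_β g_{λα} − ∂_λ g_{αβ})`. -/
noncomputable def christoffel {N : ℕ} (g : (Fin N → ℝ) → Matrix (Fin N) (Fin N) ℝ)
    (z : Fin N → ℝ) (σ α β : Fin N) : ℝ :=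
  (1 / 2) * ∑ μ, (g z)⁻¹ σ μ *
    (pd α (fun w => g w β μ) z + pd β (fun w => g w μ α) z - pd μ (fun w => g w α β) z)

lemma pd_sum_const_mul {N : ℕ} (σ : Fin N) (c : Fin N → ℝ) (f : Fin N → (Fin N → ℝ) → ℝ)
    (z : Fin N → ℝ) (hf : ∀ μ, DifferentiableAt ℝ (f μ) z) :
    pd σ (fun w => ∑ μ, c μ * f μ w) z = ∑ μ, c μ * pd σ (f μ) z := by
  unfold pd
  have h : fderiv ℝ (fun w => ∑ μ, c μ * f μ w) z
      = ∑ μ, c μ • fderiv ℝ (f μ) z := by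
    rw [fderiv_fun_sum (fun μ _ => ((hf μ).const_mul (c μ)))]
    exact Finset.sum_congr rfl fun μ _ => fderiv_const_mul (hf μ) (c μ)
  rw [h]
  simp

lemma pd_congr {N : ℕ} {U : Set (Fin N → ℝ)} (hU : IsOpen U) {z : Fin N → ℝ} (hz : z ∈ U)
    {h1 h2 : (Fin N → ℝ) → ℝ} (h : ∀ w ∈ U, h1 w = h2 w) (σ : Fin N) :
    pd σ h1 z = pd σ h2 z := by
  unfold pd
  rw [Filter.EventuallyEq.fderiv_eq (Filter.eventuallyEq_of_mem (hU.mem_nhds hz) h)]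

lemma sum_swap_aux {N : ℕ} (c A : Fin N → ℝ) (X : Fin N → Fin N → ℝ) :
    ∑ μ : Fin N, c μ * ((1/2 : ℝ) * ∑ l, A l * X l μ)
      = (1/2 : ℝ) * ∑ l, A l * ∑ μ, c μ * X l μ := by
  simp only [Finset.mul_sum]
  rw [Finset.sum_comm]
  exact Finset.sum_congr rfl fun l _ => Finset.sum_congr rfl fun μ _ => by ring

lemma sum_swap_aux2 {N : ℕ} (c : Fin N → ℝ) (A : Fin N → Fin N → ℝ) (Y : Fin N → ℝ) :
    ∑ μ : Fin N, c μ * ((1/2 : ℝ) * ∑ l, A μ l * Y l)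
      = (1/2 : ℝ) * ∑ l, (∑ μ, c μ * A μ l) * Y l := by
  simp only [Finset.mul_sum, Finset.sum_mul]
  rw [Finset.sum_comm]
  exact Finset.sum_congr rfl fun l _ => Finset.sum_congr rfl fun μ _ => by ring

lemma sum_swap_aux3 {N : ℕ} (A : Fin N → ℝ) (B : Fin N → Fin N → ℝ) (Y : Fin N → ℝ) :
    ∑ l : Fin N, (∑ m, A m * B l m) * Y l = ∑ m : Fin N, A m * ∑ l, B l m * Y l := by
  simp only [Finset.mul_sum, Finset.sum_mul]
  rw [Finset.sum_comm]
  exact Finset.sum_congr rfl fun l _ => Finset.sum_congr rfl fun μ _ => by ring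

lemma mul_sub_sum {N : ℕ} (c a b : Fin N → ℝ) :
    ∑ l : Fin N, c l * (a l - b l) = (∑ l, c l * a l) - (∑ l, c l * b l) := by
  rw [← Finset.sum_sub_distrib]
  exact Finset.sum_congr rfl fun l _ => mul_sub _ _ _

lemma expand3 {N : ℕ} (c x y w : Fin N → ℝ) :
    ∑ μ : Fin N, c μ * (x μ + y μ - w μ)
      = (∑ μ, c μ * x μ) + (∑ μ, c μ * y μ) - (∑ μ, c μ * w μ) := by
  rw [← Finset.sum_add_distrib, ← Finset.sum_sub_distrib]
  exact Finset.sum_congr rfl fun μ _ => by ring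

/-- For a smooth metric `g` pure toward a constant (1,1)-tensor `F`,
the Christoffel symbols of the Levi-Civita connection of `g` are pure toward `F` with
respect to all indices if and only if the partial derivatives of `g` are pure toward
`F`. -/
theorem stmt_8 {N : ℕ} (U : Set (Fin N → ℝ)) (hUopen : IsOpen U)
    (F : Matrix (Fin N) (Fin N) ℝ)
    (g : (Fin N → ℝ) → Matrix (Fin N) (Fin N) ℝ)
    (hsmooth : ∀ α β, ContDiffOn ℝ (⊤ : ℕ∞) (fun z => g z α β) U)
    (hsymm : ∀ z ∈ U, (g z).IsSymm)
    (hinv : ∀ z ∈ U, IsUnit (g z).det)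
    (hpure : ∀ z ∈ U, Fᵀ * g z = g z * F) :
    (∀ z ∈ U, ∀ σ α β,
        ∑ μ, F μ α * christoffel g z σ μ β = ∑ μ, F μ β * christoffel g z σ α μ ∧
        ∑ μ, F μ β * christoffel g z σ α μ = ∑ μ, F σ μ * christoffel g z μ α β) ↔
    (∀ z ∈ U, ∀ σ α β,
        ∑ μ, F μ σ * pd μ (fun w => g w α β) z = ∑ μ, F μ α * pd σ (fun w => g w μ β) z) := by
  refine forall₂_congr fun z hz => ?_
  set D : Fin N → Fin N → Fin N → ℝ := fun s a b => pd s (fun w => g w a b) z with hD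
  set G : Matrix (Fin N) (Fin N) ℝ := (g z)⁻¹ with hG
  have hdiff : ∀ a b, DifferentiableAt ℝ (fun w => g w a b) z :=
    fun a b => ((hsmooth a b).contDiffAt (hUopen.mem_nhds hz)).differentiableAt (by simp)
  -- differentiated purity
  have hstar : ∀ s a b, ∑ μ, F μ a * D s μ b = ∑ μ, F μ b * D s a μ := by
    intro s a b
    have h1 : pd s (fun w => ∑ μ, F μ a * g w μ b) z = ∑ μ, F μ a * D s μ b :=
      pd_sum_const_mul s _ _ z (fun μ => hdiff μ b)
    have h2 : pd s (fun w => ∑ μ, F μ b * g w a μ) z = ∑ μ, F μ b * D s a μ :=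
      pd_sum_const_mul s _ _ z (fun μ => hdiff a μ)
    have h3 : pd s (fun w => ∑ μ, F μ a * g w μ b) z
        = pd s (fun w => ∑ μ, F μ b * g w a μ) z := by
      apply pd_congr hUopen hz (σ := s)
      intro w hw
      have hw' := congrFun (congrFun (hpure w hw) a) b
      simp only [Matrix.mul_apply, Matrix.transpose_apply] at hw'
      rw [hw']
      exact Finset.sum_congr rfl fun μ _ => mul_comm _ _
    rw [← h1, h3, h2]
  -- purity of the inverse metric
  have hFG : ∀ s l, ∑ μ, F s μ * G μ l = ∑ μ, G s μ * F l μ := by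
    have h1 : g z * (g z)⁻¹ = 1 := Matrix.mul_nonsing_inv _ (hinv z hz)
    have h2 : (g z)⁻¹ * g z = 1 := Matrix.nonsing_inv_mul _ (hinv z hz)
    have key : F * (g z)⁻¹ = (g z)⁻¹ * Fᵀ := by
      calc F * (g z)⁻¹ = (g z)⁻¹ * (g z * F) * (g z)⁻¹ := by
            rw [← Matrix.mul_assoc, h2, one_mul]
        _ = (g z)⁻¹ * (Fᵀ * g z) * (g z)⁻¹ := by rw [hpure z hz]
        _ = (g z)⁻¹ * Fᵀ := by
            rw [Matrix.mul_assoc, Matrix.mul_assoc, h1, Matrix.mul_one]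
    intro s l
    have hk := congrFun (congrFun key s) l
    simpa [Matrix.mul_apply, Matrix.transpose_apply] using hk
  -- cancellation against the invertible matrix G
  have hcancel : ∀ v : Fin N → ℝ, (∀ s, ∑ l, G s l * v l = 0) → ∀ l, v l = 0 := by
    intro v hv l
    have hGv : G *ᵥ v = 0 := funext fun s => by
      simpa [Matrix.mulVec, dotProduct] using hv s
    have hid : g z *ᵥ (G *ᵥ v) = v := by
      rw [Matrix.mulVec_mulVec, hG, Matrix.mul_nonsing_inv _ (hinv z hz), Matrix.one_mulVec]
    rw [hGv, Matrix.mulVec_zero] at hid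
    exact (congrFun hid l).symm
  have hchris : ∀ s a b, christoffel g z s a b
      = (1/2 : ℝ) * ∑ l, G s l * (D a b l + D b l a - D l a b) := fun s a b => rfl
  -- the three pure Christoffel sums
  have hS1 : ∀ σ α β, ∑ μ, F μ α * christoffel g z σ μ β
      = (1/2 : ℝ) * ∑ l, G σ l * (∑ μ, F μ α * (D μ β l + D β l μ - D l μ β)) := by
    intro σ α β
    simp only [hchris]
    exact sum_swap_aux (fun μ => F μ α) (fun l => G σ l)
      (fun l μ => D μ β l + D β l μ - D l μ β)
  have hS2 : ∀ σ α β, ∑ μ, F μ β * christoffel g z σ α μ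
      = (1/2 : ℝ) * ∑ l, G σ l * (∑ μ, F μ β * (D α μ l + D μ l α - D l α μ)) := by
    intro σ α β
    simp only [hchris]
    exact sum_swap_aux (fun μ => F μ β) (fun l => G σ l)
      (fun l μ => D α μ l + D μ l α - D l α μ)
  have hS3 : ∀ σ α β, ∑ μ, F σ μ * christoffel g z μ α β
      = (1/2 : ℝ) * ∑ m, G σ m * (∑ l, F l m * (D α β l + D β l α - D l α β)) := by
    intro σ α β
    simp only [hchris]
    rw [sum_swap_aux2 (fun μ => F σ μ) (fun μ l => G μ l)
      (fun l => D α β l + D β l α - D l α β)]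
    congr 1
    rw [← sum_swap_aux3 (fun m => G σ m) (fun l m => F l m)
      (fun l => D α β l + D β l α - D l α β)]
    exact Finset.sum_congr rfl fun l _ => by rw [hFG σ l]
  have half_ne : (1/2 : ℝ) ≠ 0 := by norm_num
  constructor
  · -- Christoffel purity ⇒ purity of derivatives
    intro H σ α β
    have hv12 : ∀ l α β, (∑ μ, F μ α * (D μ β l + D β l μ - D l μ β))
        = (∑ μ, F μ β * (D α μ l + D μ l α - D l α μ)) := by
      intro l α β
      have key : ∀ s, ∑ l, G s l * ((∑ μ, F μ α * (D μ β l + D β l μ - D l μ β))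
          - (∑ μ, F μ β * (D α μ l + D μ l α - D l α μ))) = 0 := by
        intro s
        have h := (H s α β).1
        rw [hS1, hS2] at h
        have h' := mul_left_cancel₀ half_ne h
        rw [mul_sub_sum, h', sub_self]
      have := hcancel _ key l
      linarith [this]
    have hv23 : ∀ l α β, (∑ μ, F μ β * (D α μ l + D μ l α - D l α μ))
        = (∑ μ, F μ l * (D α β μ + D β μ α - D μ α β)) := by
      intro l α β
      have key : ∀ s, ∑ l, G s l * ((∑ μ, F μ β * (D α μ l + D μ l α - D l α μ))
          - (∑ μ, F μ l * (D α β μ + D β μ α - D μ α β))) = 0 := by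
        intro s
        have h := (H s α β).2
        rw [hS2, hS3] at h
        have h' := mul_left_cancel₀ half_ne h
        rw [mul_sub_sum, h', sub_self]
      have := hcancel _ key l
      linarith [this]
    -- Q s a b := ∑ F μ s * D μ a b − ∑ F μ a * D s μ b; show Q is cyclic and anticyclic
    set Q : Fin N → Fin N → Fin N → ℝ :=
      fun s a b => (∑ μ, F μ s * D μ a b) - (∑ μ, F μ a * D s μ b) with hQ
    have hQ1 : ∀ a b c, Q a b c = Q b c a := by
      intro a b c
      have e := hv12 c a b
      rw [expand3, expand3] at e
      have t2 : ∑ μ, F μ a * D b c μ = ∑ μ, F μ c * D b μ a := (hstar b c a).symm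
      have t3 : ∑ μ, F μ a * D c μ b = ∑ μ, F μ b * D c a μ := hstar c a b
      simp only [hQ]
      linarith [e, t2, t3]
    have hQ2 : ∀ a b c, Q c a b + Q a b c = 0 := by
      intro a b c
      have e := hv23 a b c
      rw [expand3, expand3] at e
      have t1 : ∑ μ, F μ c * D b μ a = ∑ μ, F μ a * D b c μ := hstar b c a
      have t3 : ∑ μ, F μ c * D a b μ = ∑ μ, F μ b * D a μ c := (hstar a b c).symm
      simp only [hQ]
      linarith [e, t1, t3]
    have hQ0 : Q σ α β = 0 := by
      have h1 : Q σ α β = Q β σ α := by rw [hQ1, hQ1, hQ1]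
      have h2 := hQ2 σ α β
      linarith [h1, h2]
    simp only [hQ] at hQ0
    linarith [hQ0]
  · -- purity of derivatives ⇒ Christoffel purity
    intro hP σ α β
    have hPD : ∀ s a b, ∑ μ, F μ s * D μ a b = ∑ μ, F μ a * D s μ b := hP
    constructor
    · rw [hS1, hS2]
      congr 1
      refine Finset.sum_congr rfl fun l _ => ?_
      congr 1
      rw [expand3, expand3]
      have t1 := hPD α β l
      have t2a : ∑ μ, F μ α * D β l μ = ∑ μ, F μ l * D β μ α := (hstar β l α).symm
      have t2b : ∑ μ, F μ β * D μ l α = ∑ μ, F μ l * D β μ α := hPD β l α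
      have t3 := hstar l α β
      linarith [t1, t2a, t2b, t3]
    · rw [hS2, hS3]
      congr 1
      refine Finset.sum_congr rfl fun l _ => ?_
      congr 1
      rw [expand3, expand3]
      have t1 : ∑ μ, F μ β * D α μ l = ∑ μ, F μ l * D α β μ := hstar α β l
      have t2 : ∑ μ, F μ β * D μ l α = ∑ μ, F μ l * D β μ α := hPD β l α
      have t3a : ∑ μ, F μ β * D l α μ = ∑ μ, F μ α * D l μ β := (hstar l α β).symm
      have t3b : ∑ μ, F μ l * D μ α β = ∑ μ, F μ α * D l μ β := hPD l α β
      linarith [t1, t2, t3a, t3b]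
end

section
/- Let G, F ∈ Matrix (Fin N) (Fin N) ℝ with G symmetric and invertible, F * F = 0, and Fᵀ * G = G * F. Then the matrix G + G * F (in components g_{αβ} + g̃_{αβ} with g̃_{αβ} = ∑_λ g_{λβ} F^λ_α) is invertible, and its inverse is G⁻¹ − F * G⁻¹ = G⁻¹ − G⁻¹ * Fᵀ (in components g^{αβ} − g̃^{αβ} with g̃^{αβ} = ∑_λ g^{αλ} F^β_λ). -/
open Matrix

/-- If `G` is a symmetric invertible matrix, `F` is nilpotent
(`F * F = 0`), and `G` is pure toward `F` (`Fᵀ * G = G * F`), then `G + G * F`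
is invertible with inverse `G⁻¹ − F * G⁻¹ = G⁻¹ − G⁻¹ * Fᵀ`. -/
theorem stmt_9 {N : ℕ} (G F : Matrix (Fin N) (Fin N) ℝ)
    (hsymm : G.IsSymm) (hinv : IsUnit G.det)
    (hF : F * F = 0) (hpure : Fᵀ * G = G * F) :
    IsUnit (G + G * F).det ∧
    (G + G * F)⁻¹ = G⁻¹ - F * G⁻¹ ∧
    G⁻¹ - F * G⁻¹ = G⁻¹ - G⁻¹ * Fᵀ := by
  have hGG : G * G⁻¹ = 1 := Matrix.mul_nonsing_inv G hinv
  have hGG' : G⁻¹ * G = 1 := Matrix.nonsing_inv_mul G hinv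
  have key : (G + G * F) * (G⁻¹ - F * G⁻¹) = 1 := by
    have : G * F * (F * G⁻¹) = 0 := by
      rw [Matrix.mul_assoc G F, ← Matrix.mul_assoc F F, hF, Matrix.zero_mul,
        Matrix.mul_zero]
    rw [Matrix.add_mul, Matrix.mul_sub, Matrix.mul_sub, hGG, this,
      ← Matrix.mul_assoc G F G⁻¹, sub_zero]
    abel
  have hu : IsUnit (G + G * F).det := Matrix.isUnit_det_of_right_inverse key
  refine ⟨hu, Matrix.inv_eq_right_inv key, ?_⟩
  have : F * G⁻¹ = G⁻¹ * Fᵀ := by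
    calc F * G⁻¹ = G⁻¹ * (G * F) * G⁻¹ := by
          rw [← Matrix.mul_assoc, hGG', Matrix.one_mul]
      _ = G⁻¹ * (Fᵀ * G) * G⁻¹ := by rw [hpure]
      _ = G⁻¹ * Fᵀ := by
          rw [← Matrix.mul_assoc, Matrix.mul_assoc, Matrix.mul_assoc, hGG,
            Matrix.mul_one]
  rw [this]
end

section
/- Let U ⊆ ℝ^N be an open set, F ∈ Matrix (Fin N) (Fin N) ℝ a constant matrix with F * F = 0, and g : U → Matrix (Fin N) (Fin N) ℝ a smooth metric (each g(z) symmetric and invertible) that is pure toward F (Fᵀ * g(z) = g(z) * F) and whose partial derivatives are pure toward F (∑_λ F^λ_σ ∂_λ g_{αβ} = ∑_λ F^λ_α ∂_σ g_{λβ} for all indices), i.e. (U, g, F) is a B-manifold. Let g̃(z) = Fᵀ * g(z), and suppose g(z) + g̃(z) is invertible for all z ∈ U. Then the Christoffel symbols of the Levi-Civita connection of the metric g + g̃ coincide with the Christoffel symbols of the Levi-Civita connection of g on U. -/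
open Matrix

lemma pd_congr_s10 {N : ℕ} {f h : (Fin N → ℝ) → ℝ} {z : Fin N → ℝ}
    (he : f =ᶠ[nhds z] h) (σ : Fin N) : pd σ f z = pd σ h z := by
  unfold pd; rw [he.fderiv_eq]

lemma pd_add {N : ℕ} (σ : Fin N) {f h : (Fin N → ℝ) → ℝ} {z : Fin N → ℝ}
    (hf : DifferentiableAt ℝ f z) (hh : DifferentiableAt ℝ h z) :
    pd σ (fun w => f w + h w) z = pd σ f z + pd σ h z := by
  unfold pd; rw [fderiv_fun_add hf hh]; simp

lemma pd_sum {N : ℕ} (σ : Fin N) (c : Fin N → ℝ) (f : Fin N → (Fin N → ℝ) → ℝ)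
    {z : Fin N → ℝ} (h : ∀ x, DifferentiableAt ℝ (f x) z) :
    pd σ (fun w => ∑ x, c x * f x w) z = ∑ x, c x * pd σ (f x) z := by
  unfold pd
  rw [fderiv_fun_sum (fun x _ => ((h x).const_mul (c x)))]
  simp only [ContinuousLinearMap.coe_sum', Finset.sum_apply]
  congr 1; ext x
  rw [fderiv_const_mul (h x)]
  simp


/-- On a B-manifold `(U, g, F)` (with `F * F = 0`, `g` pure toward
`F` and with pure partial derivatives), if `g + g̃` is invertible (where
`g̃ = Fᵀ * g = g * F`), then the metrics `g` and `g + g̃` have the same Christoffel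
symbols, i.e. they originate one and the same Riemannian connection. -/
theorem stmt_10 {N : ℕ} (U : Set (Fin N → ℝ)) (hUopen : IsOpen U)
    (F : Matrix (Fin N) (Fin N) ℝ) (hF : F * F = 0)
    (g : (Fin N → ℝ) → Matrix (Fin N) (Fin N) ℝ)
    (hsmooth : ∀ α β, ContDiffOn ℝ (⊤ : ℕ∞) (fun z => g z α β) U)
    (hsymm : ∀ z ∈ U, (g z).IsSymm)
    (hinv : ∀ z ∈ U, IsUnit (g z).det)
    (hpure : ∀ z ∈ U, Fᵀ * g z = g z * F)
    (hdpure : ∀ z ∈ U, ∀ σ α β,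
      ∑ μ, F μ σ * pd μ (fun w => g w α β) z = ∑ μ, F μ α * pd σ (fun w => g w μ β) z)
    (hinv' : ∀ z ∈ U, IsUnit (g z + Fᵀ * g z).det) :
    ∀ z ∈ U, ∀ σ α β,
      christoffel (fun w => g w + Fᵀ * g w) z σ α β = christoffel g z σ α β := by
  intro z hz σ α β
  have hnhds : U ∈ nhds z := hUopen.mem_nhds hz
  have hdiff : ∀ a b, DifferentiableAt ℝ (fun w => g w a b) z := fun a b =>
    ((hsmooth a b).contDiffAt hnhds).differentiableAt (by simp)
  -- nilpotency of Fᵀ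
  have hFt : Fᵀ * Fᵀ = 0 := by rw [← transpose_mul, hF, transpose_zero]
  -- inverse of g + Fᵀ g
  have h1 : (1 + Fᵀ) * (1 - Fᵀ) = (1 : Matrix (Fin N) (Fin N) ℝ) := by
    noncomm_ring; simp [hFt]
  have h2 : (1 - Fᵀ) * (1 + Fᵀ) = (1 : Matrix (Fin N) (Fin N) ℝ) := by
    noncomm_ring; simp [hFt]
  have hgg : g z * (g z)⁻¹ = 1 := Matrix.mul_nonsing_inv _ (hinv z hz)
  have hinvh : (g z + Fᵀ * g z)⁻¹ = (g z)⁻¹ * (1 - Fᵀ) := by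
    apply Matrix.inv_eq_right_inv
    calc (g z + Fᵀ * g z) * ((g z)⁻¹ * (1 - Fᵀ))
        = (1 + Fᵀ) * (g z * (g z)⁻¹) * (1 - Fᵀ) := by noncomm_ring
      _ = 1 := by rw [hgg, mul_one, h1]
  have hkey : (g z + Fᵀ * g z)⁻¹ * (1 + Fᵀ) = (g z)⁻¹ := by
    rw [hinvh, mul_assoc, h2, mul_one]
  -- the bracket vector for g
  set B : Fin N → ℝ := fun μ =>
    pd α (fun w => g w β μ) z + pd β (fun w => g w μ α) z - pd μ (fun w => g w α β) z
    with hB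
  -- entrywise purity identity on U : ∑ x, F x a * g w x b = ∑ x, g w a x * F x b
  have hpure' : ∀ a b, (fun w => ∑ x, F x a * g w x b) =ᶠ[nhds z]
      (fun w => ∑ x, g w a x * F x b) := by
    intro a b
    filter_upwards [hnhds] with w hw
    have := congrFun (congrFun (hpure w hw) a) b
    simpa [Matrix.mul_apply, Matrix.transpose_apply] using this
  -- pd of entries of Fᵀ * g, in the "column" form
  have hpdcol : ∀ (τ a b : Fin N), pd τ (fun w => (Fᵀ * g w) a b) z
      = ∑ x, F x b * pd τ (fun w => g w a x) z := by
    intro τ a b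
    have e1 : (fun w => (Fᵀ * g w) a b) = fun w => ∑ x, F x a * g w x b := by
      funext w; simp [Matrix.mul_apply, Matrix.transpose_apply]
    rw [e1, pd_congr_s10 (hpure' a b) τ]
    have e2 : (fun w => ∑ x, g w a x * F x b) = fun w => ∑ x, F x b * g w a x := by
      funext w; congr 1; ext x; ring
    rw [e2, pd_sum τ _ _ (fun x => hdiff a x)]
  -- pd of entries of Fᵀ * g, "row" form
  have hpdrow : ∀ (τ a b : Fin N), pd τ (fun w => (Fᵀ * g w) a b) z
      = ∑ x, F x a * pd τ (fun w => g w x b) z := by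
    intro τ a b
    have e1 : (fun w => (Fᵀ * g w) a b) = fun w => ∑ x, F x a * g w x b := by
      funext w; simp [Matrix.mul_apply, Matrix.transpose_apply]
    rw [e1, pd_sum τ _ _ (fun x => hdiff x b)]
  have hdiff' : ∀ a b, DifferentiableAt ℝ (fun w => (Fᵀ * g w) a b) z := by
    intro a b
    have e1 : (fun w => (Fᵀ * g w) a b) = fun w => ∑ x, F x a * g w x b := by
      funext w; simp [Matrix.mul_apply, Matrix.transpose_apply]
    rw [e1]
    exact DifferentiableAt.fun_sum (fun x _ => (hdiff x b).const_mul (F x a))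
  -- the bracket vector for h equals (1 + Fᵀ) B
  have key : ∀ μ,
      pd α (fun w => (g w + Fᵀ * g w) β μ) z + pd β (fun w => (g w + Fᵀ * g w) μ α) z
        - pd μ (fun w => (g w + Fᵀ * g w) α β) z
      = B μ + ∑ x, F x μ * B x := by
    intro μ
    have t1 : pd α (fun w => (g w + Fᵀ * g w) β μ) z
        = pd α (fun w => g w β μ) z + ∑ x, F x μ * pd α (fun w => g w β x) z := by
      have : (fun w => (g w + Fᵀ * g w) β μ)
          = fun w => g w β μ + (Fᵀ * g w) β μ := by funext w; simp [Matrix.add_apply]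
      rw [this, pd_add α (hdiff β μ) (hdiff' β μ), hpdcol]
    have t2 : pd β (fun w => (g w + Fᵀ * g w) μ α) z
        = pd β (fun w => g w μ α) z + ∑ x, F x μ * pd β (fun w => g w x α) z := by
      have : (fun w => (g w + Fᵀ * g w) μ α)
          = fun w => g w μ α + (Fᵀ * g w) μ α := by funext w; simp [Matrix.add_apply]
      rw [this, pd_add β (hdiff μ α) (hdiff' μ α), hpdrow]
    have t3 : pd μ (fun w => (g w + Fᵀ * g w) α β) z
        = pd μ (fun w => g w α β) z + ∑ x, F x μ * pd x (fun w => g w α β) z := by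
      have : (fun w => (g w + Fᵀ * g w) α β)
          = fun w => g w α β + (Fᵀ * g w) α β := by funext w; simp [Matrix.add_apply]
      rw [this, pd_add μ (hdiff α β) (hdiff' α β), hpdrow]
      rw [hdpure z hz μ α β]
    rw [t1, t2, t3, hB]
    have hs : ∀ (u v w : Fin N → ℝ), ∑ x, F x μ * (u x + v x - w x)
        = ∑ x, F x μ * u x + ∑ x, F x μ * v x - ∑ x, F x μ * w x := by
      intro u v w
      rw [← Finset.sum_add_distrib, ← Finset.sum_sub_distrib]
      exact Finset.sum_congr rfl fun x _ => by ring
    rw [hs]; ring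
  -- finish
  unfold christoffel
  simp only [key]
  congr 1
  have expand : ∑ μ, (g z + Fᵀ * g z)⁻¹ σ μ * (B μ + ∑ x, F x μ * B x)
      = ∑ μ, ((g z + Fᵀ * g z)⁻¹ * (1 + Fᵀ)) σ μ * B μ := by
    simp only [Matrix.mul_apply, Matrix.add_apply, Matrix.one_apply, Matrix.transpose_apply,
      mul_add, Finset.mul_sum, Finset.sum_add_distrib, Finset.sum_mul, add_mul]
    congr 1
    · symm
      refine Finset.sum_congr rfl fun x _ => ?_
      simp [mul_ite, ite_mul]
    · rw [Finset.sum_comm]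
      exact Finset.sum_congr rfl fun x _ => Finset.sum_congr rfl fun i _ => by ring
  rw [expand, hkey]
end

section
/- Let N = 2n + m with n ≥ 1, and let F ∈ Matrix (Fin N) (Fin N) ℝ be the standard semitangential structure: F e_k = e_{n+k} for 0 ≤ k < n and F e_j = 0 for all other basis vectors (so F^{n+i}_k = δ^i_k and all other entries vanish; F * F = 0). Let U ⊆ ℝ^N be a connected open set, g a smooth metric on U (symmetric, invertible) pure toward F with pure partial derivatives (so (U, g, F) is a B-manifold), and h : U → ℝ a smooth nowhere-vanishing function. Then (U, h·g, F) is a B-manifold (i.e. the partial derivatives of h·g are pure toward F) if and only if h is constant on U. -/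
open Matrix

/-- Sums against the standard semitangential structure pick out the `σ+n`-th entry. -/
lemma sumF_eq (n m : ℕ) (F : Matrix (Fin (2 * n + m)) (Fin (2 * n + m)) ℝ)
    (hF : ∀ i j, F i j = if (i : ℕ) = (j : ℕ) + n ∧ (j : ℕ) < n then 1 else 0)
    (X : Fin (2 * n + m) → ℝ) (σ : Fin (2 * n + m)) :
    ∑ μ, F μ σ * X μ =
      if hσ : (σ : ℕ) < n then X ⟨(σ : ℕ) + n, by omega⟩ else 0 := by
  split_ifs with hσ
  · rw [Finset.sum_eq_single (⟨(σ : ℕ) + n, by omega⟩ : Fin (2 * n + m))]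
    · rw [hF]
      simp [hσ]
    · intro b _ hb
      rw [hF, if_neg, zero_mul]
      rintro ⟨hb1, -⟩
      exact hb (Fin.ext hb1)
    · simp
  · apply Finset.sum_eq_zero
    intro b _
    rw [hF, if_neg, zero_mul]
    rintro ⟨-, hb2⟩
    exact hσ hb2

/-- A continuous linear functional vanishing on the basis vectors is zero. -/
lemma clm_eq_zero {N : ℕ} (L : (Fin N → ℝ) →L[ℝ] ℝ)
    (hL : ∀ σ, L (Pi.single σ 1) = 0) : L = 0 := by
  ext x
  have hx : x = ∑ σ, Pi.single σ (x σ) := (Finset.univ_sum_single x).symm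
  have hs : ∀ σ, (Pi.single σ (x σ) : Fin N → ℝ) = x σ • (Pi.single σ 1 : Fin N → ℝ) := by
    intro σ
    rw [← Pi.single_smul, smul_eq_mul, mul_one]
  conv_lhs => rw [hx]
  rw [map_sum]
  have : ∀ σ ∈ Finset.univ, L (Pi.single σ (x σ)) = 0 := by
    intro σ _
    rw [hs σ, L.map_smul, hL, smul_zero]
  rw [Finset.sum_eq_zero this]
  rfl

/-- Let `F` be the standard semitangential structure on
`ℝ^{2n+m}` (`F e_k = e_{n+k}` for `k < n`, `F e_j = 0` otherwise), let `(U, g, F)`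
be a B-manifold on a connected open set `U`, and let `h` be a smooth
nowhere-vanishing function on `U`.  Then `(U, h·g, F)` is a B-manifold (i.e. the
partial derivatives of `h·g` are pure toward `F`) if and only if `h` is constant
on `U`. -/
theorem stmt_11 (n m : ℕ) (hn : 1 ≤ n)
    (F : Matrix (Fin (2 * n + m)) (Fin (2 * n + m)) ℝ)
    (hF : ∀ i j, F i j = if (i : ℕ) = (j : ℕ) + n ∧ (j : ℕ) < n then 1 else 0)
    (U : Set (Fin (2 * n + m) → ℝ)) (hUopen : IsOpen U) (hUconn : IsConnected U)
    (g : (Fin (2 * n + m) → ℝ) → Matrix (Fin (2 * n + m)) (Fin (2 * n + m)) ℝ)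
    (hsmooth : ∀ α β, ContDiffOn ℝ (⊤ : ℕ∞) (fun z => g z α β) U)
    (hsymm : ∀ z ∈ U, (g z).IsSymm)
    (hinv : ∀ z ∈ U, IsUnit (g z).det)
    (hpure : ∀ z ∈ U, Fᵀ * g z = g z * F)
    (hdpure : ∀ z ∈ U, ∀ σ α β,
      ∑ μ, F μ σ * pd μ (fun w => g w α β) z = ∑ μ, F μ α * pd σ (fun w => g w μ β) z)
    (h : (Fin (2 * n + m) → ℝ) → ℝ)
    (hhsmooth : ContDiffOn ℝ (⊤ : ℕ∞) h U) (hh0 : ∀ z ∈ U, h z ≠ 0) :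
    (∀ z ∈ U, ∀ σ α β,
        ∑ μ, F μ σ * pd μ (fun w => h w * g w α β) z
          = ∑ μ, F μ α * pd σ (fun w => h w * g w μ β) z) ↔
    (∀ z ∈ U, ∀ w ∈ U, h z = h w) := by
  have hgd : ∀ z ∈ U, ∀ α β, DifferentiableAt ℝ (fun w => g w α β) z := by
    intro z hz α β
    exact ((hsmooth α β).differentiableOn (by simp)).differentiableAt (hUopen.mem_nhds hz)
  have hhd : ∀ z ∈ U, DifferentiableAt ℝ h z := by
    intro z hz
    exact (hhsmooth.differentiableOn (by simp)).differentiableAt (hUopen.mem_nhds hz)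
  have hprod : ∀ z ∈ U, ∀ μ α β, pd μ (fun w => h w * g w α β) z
      = h z * pd μ (fun w => g w α β) z + g z α β * pd μ h z := by
    intro z hz μ α β
    unfold pd
    rw [fderiv_fun_mul (hhd z hz) (hgd z hz α β)]
    simp
  constructor
  · -- forward: purity of derivatives of h·g implies h constant
    intro H
    -- first: all partial derivatives of h vanish on U
    have key : ∀ z ∈ U, fderiv ℝ h z = 0 := by
      intro z hz
      have star : ∀ σ α β : Fin (2 * n + m),
          (if hσ : (σ : ℕ) < n then
              g z α β * pd (⟨(σ : ℕ) + n, by omega⟩ : Fin (2 * n + m)) h z else 0)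
            = (if hα : (α : ℕ) < n then
              g z ⟨(α : ℕ) + n, by omega⟩ β * pd σ h z else 0) := by
        intro σ α β
        have h1 := H z hz σ α β
        have h2 := hdpure z hz σ α β
        rw [sumF_eq n m F hF, sumF_eq n m F hF] at h1 h2
        split_ifs at h1 h2 ⊢ with hσ hα hα
        · rw [hprod z hz, hprod z hz, h2] at h1
          linarith
        · rw [hprod z hz, h2] at h1
          linarith
        · rw [hprod z hz, ← h2] at h1
          linarith
        · rfl
      obtain ⟨β₀, hβ₀⟩ : ∃ β₀, g z ⟨(0 : ℕ) + n, by omega⟩ β₀ ≠ 0 := by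
        by_contra hc
        push_neg at hc
        have hdet : (g z).det = 0 :=
          Matrix.det_eq_zero_of_row_eq_zero ⟨(0 : ℕ) + n, by omega⟩ hc
        exact (isUnit_iff_ne_zero.mp (hinv z hz)) hdet
      set α₀ : Fin (2 * n + m) := ⟨0, by omega⟩ with hα₀
      have hα₀lt : (α₀ : ℕ) < n := by simp [hα₀]; omega
      have hge : ∀ σ : Fin (2 * n + m), n ≤ (σ : ℕ) → pd σ h z = 0 := by
        intro σ hσ
        have hs := star σ α₀ β₀
        rw [dif_neg (by omega), dif_pos hα₀lt] at hs
        have : g z ⟨(α₀ : ℕ) + n, by omega⟩ β₀ * pd σ h z = 0 := hs.symm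
        have hne : g z ⟨(α₀ : ℕ) + n, by omega⟩ β₀ ≠ 0 := by
          simpa [hα₀] using hβ₀
        exact (mul_eq_zero.mp this).resolve_left hne
      have hall : ∀ σ : Fin (2 * n + m), pd σ h z = 0 := by
        intro σ
        by_cases hσ : (σ : ℕ) < n
        · have hs := star σ α₀ β₀
          rw [dif_pos hσ, dif_pos hα₀lt] at hs
          rw [hge (⟨(σ : ℕ) + n, by omega⟩ : Fin (2 * n + m)) (by simp), mul_zero] at hs
          have : g z ⟨(α₀ : ℕ) + n, by omega⟩ β₀ * pd σ h z = 0 := hs.symm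
          have hne : g z ⟨(α₀ : ℕ) + n, by omega⟩ β₀ ≠ 0 := by
            simpa [hα₀] using hβ₀
          exact (mul_eq_zero.mp this).resolve_left hne
        · exact hge σ (by omega)
      exact clm_eq_zero _ hall
    -- locally constant on U via convex balls, then constant by connectedness
    intro z hz w hw
    have hloc : IsLocallyConstant (fun x : U => h x) := by
      rw [IsLocallyConstant.iff_exists_open]
      rintro ⟨x, hx⟩
      obtain ⟨ε, hε, hball⟩ := Metric.isOpen_iff.mp hUopen x hx
      refine ⟨Subtype.val ⁻¹' Metric.ball x ε,
        continuous_subtype_val.isOpen_preimage _ Metric.isOpen_ball,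
        by simpa using hε, ?_⟩
      rintro ⟨y, hy⟩ hy'
      have hconv : Convex ℝ (Metric.ball x ε) := convex_ball x ε
      have hdiff : DifferentiableOn ℝ h (Metric.ball x ε) :=
        (hhsmooth.differentiableOn (by simp)).mono hball
      refine hconv.is_const_of_fderivWithin_eq_zero hdiff ?_ hy' (Metric.mem_ball_self (by linarith))
      intro v hv
      rw [fderivWithin_of_isOpen Metric.isOpen_ball hv]
      exact key v (hball hv)
    have : PreconnectedSpace U := Subtype.preconnectedSpace hUconn.isPreconnected
    exact hloc.apply_eq_of_preconnectedSpace ⟨z, hz⟩ ⟨w, hw⟩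
  · -- backward: if h is constant on U then h·g still has pure derivatives
    intro Hc z hz σ α β
    have hfd : ∀ μ, pd μ h z = 0 := by
      have heq : h =ᶠ[nhds z] fun _ => h z :=
        Filter.eventuallyEq_of_mem (hUopen.mem_nhds hz) (fun w hw => Hc w hw z hz)
      intro μ
      unfold pd
      rw [heq.fderiv_eq, fderiv_fun_const]
      simp
    have e1 : ∀ μ α β, pd μ (fun w => h w * g w α β) z
        = h z * pd μ (fun w => g w α β) z := by
      intro μ α β
      rw [hprod z hz, hfd, mul_zero, add_zero]
    calc ∑ μ, F μ σ * pd μ (fun w => h w * g w α β) z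
        = h z * ∑ μ, F μ σ * pd μ (fun w => g w α β) z := by
          rw [Finset.mul_sum]
          exact Finset.sum_congr rfl fun μ _ => by rw [e1]; ring
      _ = h z * ∑ μ, F μ α * pd σ (fun w => g w μ β) z := by
          rw [hdpure z hz σ α β]
      _ = ∑ μ, F μ α * pd σ (fun w => h w * g w μ β) z := by
          rw [Finset.mul_sum]
          exact Finset.sum_congr rfl fun μ _ => by rw [e1]; ring
end

section
/- Let U ⊆ ℝ^N be an open set, Γ^α_{λβ} : U → ℝ continuous connection coefficients, and z : I → U a twice differentiable curve on an open interval I satisfying δż^α/dt := z̈^α + ∑_{λ,β} Γ^α_{λβ}(z) ż^λ ż^β = a(t) ż^α for a continuous function a : I → ℝ. Then z is geodesic up to reparametrization: there exist an open interval J and a twice differentiable function φ : J → I with φ' > 0 such that the curve w = z ∘ φ satisfies the geodesic equation ẅ^α(q) + ∑_{λ,β} Γ^α_{λβ}(w(q)) ẇ^λ(q) ẇ^β(q) = 0 for all q ∈ J. -/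
/-!
Solve `φ'' = -a(φ) φ'²` by quadrature: with `A' = a`, the function `S = ∫ exp A` is strictly
increasing on `I`, and its inverse `φ` satisfies `φ' = exp (-A ∘ φ)`, hence `φ'' = -a(φ) φ'²`.
By the chain rule `w = z ∘ φ` has `ẇ = φ' ż` and `ẅ = φ'² z̈ + φ'' ż = φ'² (z̈ - a ż)`, so the
geodesic operator of `w` is `φ'²` times `δż/dt - a ż = 0`.
-/

open Set Filter intervalIntegral
open scoped Topology

theorem hasDerivAt_integral_of_continuousOn {E : Type*} [NormedAddCommGroup E]
    [NormedSpace ℝ E] [CompleteSpace E] {f : ℝ → E} {I : Set ℝ} {t₀ t : ℝ} (hIo : IsOpen I)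
    (hIc : IsPreconnected I) (hf : ContinuousOn f I) (ht₀ : t₀ ∈ I) (ht : t ∈ I) :
    HasDerivAt (fun s => ∫ u in t₀..s, f u) (f t) t :=
  integral_hasDerivAt_right
    ((hf.mono (hIc.ordConnected.uIcc_subset ht₀ ht)).intervalIntegrable)
    (hf.stronglyMeasurableAtFilter hIo t ht) (hf.continuousAt (hIo.mem_nhds ht))

theorem exists_bijOn_hasDerivAt_inv_of_deriv_pos {S S' : ℝ → ℝ} {I : Set ℝ} (hIo : IsOpen I)
    (hIc : IsPreconnected I) (hS : ∀ t ∈ I, HasDerivAt S (S' t) t) (hS'c : ContinuousOn S' I)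
    (hS'pos : ∀ t ∈ I, 0 < S' t) :
    ∃ (J : Set ℝ) (φ : ℝ → ℝ), IsOpen J ∧ IsPreconnected J ∧ BijOn φ J I ∧
      ∀ q ∈ J, HasDerivAt φ (S' (φ q))⁻¹ q := by
  have hSc : ContinuousOn S I := fun t ht => (hS t ht).continuousAt.continuousWithinAt
  have hSstrict : ∀ t ∈ I, HasStrictDerivAt S (S' t) t := fun t ht =>
    hasStrictDerivAt_of_hasDerivAt_of_continuousAt
      (eventually_of_mem (hIo.mem_nhds ht) hS) (hS'c.continuousAt (hIo.mem_nhds ht))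
  have hSmono : StrictMonoOn S I :=
    strictMonoOn_of_deriv_pos (convex_iff_ordConnected.2 hIc.ordConnected) hSc fun t ht => by
      rw [hIo.interior_eq] at ht
      exact (hS t ht).deriv ▸ hS'pos t ht
  have hbij : BijOn S I (S '' I) := hSmono.injOn.bijOn_image
  have hinv : InvOn (Function.invFunOn S I) S I (S '' I) := hbij.invOn_invFunOn
  refine ⟨S '' I, Function.invFunOn S I, ?_, hIc.image S hSc, BijOn.symm hinv.symm hbij, ?_⟩
  · refine isOpen_iff_mem_nhds.2 ?_
    rintro _ ⟨t, ht, rfl⟩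
    rw [← (hSstrict t ht).map_nhds_eq (hS'pos t ht).ne']
    exact image_mem_map (hIo.mem_nhds ht)
  · rintro _ ⟨t, ht, rfl⟩
    rw [hinv.1 ht]
    exact ((hSstrict t ht).to_local_left_inverse (hS'pos t ht).ne'
      (eventually_of_mem (hIo.mem_nhds ht) fun s hs => hinv.1 hs)).hasDerivAt

theorem exists_reparam_hasDerivAt_deriv {a : ℝ → ℝ} {I : Set ℝ} (hIo : IsOpen I)
    (hIc : IsPreconnected I) (ha : ContinuousOn a I) :
    ∃ (J : Set ℝ) (φ : ℝ → ℝ), IsOpen J ∧ IsPreconnected J ∧ BijOn φ J I ∧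
      ∀ q ∈ J, DifferentiableAt ℝ φ q ∧ 0 < deriv φ q ∧
        HasDerivAt (deriv φ) (-a (φ q) * deriv φ q ^ 2) q := by
  rcases I.eq_empty_or_nonempty with rfl | ⟨t₀, ht₀⟩
  · exact ⟨∅, id, isOpen_empty, isPreconnected_empty, by simp, by simp⟩
  set A : ℝ → ℝ := fun t => ∫ u in t₀..t, a u
  have hA : ∀ t ∈ I, HasDerivAt A (a t) t := fun t ht =>
    hasDerivAt_integral_of_continuousOn hIo hIc ha ht₀ ht
  have hexpA : ContinuousOn (fun t => Real.exp (A t)) I := fun t ht =>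
    (hA t ht).continuousAt.rexp.continuousWithinAt
  obtain ⟨J, φ, hJo, hJc, hφbij, hφ⟩ := exists_bijOn_hasDerivAt_inv_of_deriv_pos hIo hIc
    (fun t ht => hasDerivAt_integral_of_continuousOn hIo hIc hexpA ht₀ ht) hexpA
    (fun t _ => Real.exp_pos _)
  have hφ' : ∀ q ∈ J, deriv φ q = Real.exp (-A (φ q)) := fun q hq => by
    rw [(hφ q hq).deriv, Real.exp_neg]
  refine ⟨J, φ, hJo, hJc, hφbij, fun q hq => ⟨(hφ q hq).differentiableAt, ?_, ?_⟩⟩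
  · exact hφ' q hq ▸ Real.exp_pos _
  · have hφA := ((hA _ (hφbij.mapsTo hq)).comp q (hφ q hq)).neg.exp
    refine (hφA.congr_of_eventuallyEq ?_).congr_deriv ?_
    · filter_upwards [hJo.mem_nhds hq] with s hs using hφ' s hs
    · simp only [hφ' q hq, Function.comp_apply, Pi.neg_apply, Real.exp_neg]
      ring

theorem hasDerivAt_deriv_comp {f f' φ : ℝ → ℝ} {q f'' φ'' : ℝ}
    (hf : ∀ᶠ s in 𝓝 q, HasDerivAt f (f' (φ s)) (φ s))
    (hφ : ∀ᶠ s in 𝓝 q, DifferentiableAt ℝ φ s) (hf' : HasDerivAt f' f'' (φ q))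
    (hφ' : HasDerivAt (deriv φ) φ'' q) :
    HasDerivAt (deriv fun r => f (φ r)) (f'' * deriv φ q ^ 2 + f' (φ q) * φ'') q := by
  have hderiv : deriv (fun r => f (φ r)) =ᶠ[𝓝 q] fun s => f' (φ s) * deriv φ s := by
    filter_upwards [hf, hφ] with s hfs hφs using (hfs.comp s hφs.hasDerivAt).deriv
  refine (((hf'.comp q hφ.self_of_nhds.hasDerivAt).mul hφ').congr_of_eventuallyEq
    hderiv).congr_deriv ?_
  simp only [Function.comp_apply]
  ring

theorem stmt_13_general {N : ℕ}
    (Γ : (Fin N → ℝ) → Fin N → Fin N → Fin N → ℝ)   -- Γ z α λ β = Γ^α_{λβ}(z)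
    (I : Set ℝ) (hIopen : IsOpen I) (hIconn : IsPreconnected I)  -- open interval
    (z : ℝ → Fin N → ℝ)
    (hz1 : ∀ t ∈ I, DifferentiableAt ℝ z t)
    (hz2 : ∀ t ∈ I, DifferentiableAt ℝ (deriv z) t)
    (a : ℝ → ℝ) (ha : ContinuousOn a I)
    (hpar : ∀ t ∈ I, ∀ α, deriv (fun s => deriv z s α) t
      + ∑ μ, ∑ β, Γ (z t) α μ β * deriv z t μ * deriv z t β = a t * deriv z t α) :
    ∃ (J : Set ℝ) (φ : ℝ → ℝ), IsOpen J ∧ IsPreconnected J ∧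
      Set.BijOn φ J I ∧
      (∀ q ∈ J, DifferentiableAt ℝ φ q ∧ DifferentiableAt ℝ (deriv φ) q ∧ 0 < deriv φ q) ∧
      (∀ q ∈ J, ∀ α,
        deriv (fun s => deriv (fun r => z (φ r) α) s) q
          + ∑ μ, ∑ β, Γ (z (φ q)) α μ β * deriv (fun r => z (φ r) μ) q *
              deriv (fun r => z (φ r) β) q = 0) := by
  obtain ⟨J, φ, hJo, hJc, hφbij, hφ⟩ := exists_reparam_hasDerivAt_deriv hIopen hIconn ha
  refine ⟨J, φ, hJo, hJc, hφbij,
    fun q hq => ⟨(hφ q hq).1, (hφ q hq).2.2.differentiableAt, (hφ q hq).2.1⟩, fun q hq α => ?_⟩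
  have ht := hφbij.mapsTo hq
  have hzφ : ∀ β, ∀ᶠ s in 𝓝 q, HasDerivAt (fun r => z r β) (deriv z (φ s) β) (φ s) :=
    fun β => eventually_of_mem (hJo.mem_nhds hq) fun s hs =>
      hasDerivAt_pi.1 (hz1 _ (hφbij.mapsTo hs)).hasDerivAt β
  have hw' : ∀ β, deriv (fun r => z (φ r) β) q = deriv z (φ q) β * deriv φ q := fun β =>
    ((hzφ β).self_of_nhds.comp q (hφ q hq).1.hasDerivAt).deriv
  have hz'' := hasDerivAt_pi.1 (hz2 _ ht).hasDerivAt α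
  have hw'' := hasDerivAt_deriv_comp (hzφ α)
    (eventually_of_mem (hJo.mem_nhds hq) fun s hs => (hφ s hs).1) hz'' (hφ q hq).2.2
  have hquad : ∑ μ, ∑ β, Γ (z (φ q)) α μ β * (deriv z (φ q) μ * deriv φ q) *
      (deriv z (φ q) β * deriv φ q) = (∑ μ, ∑ β, Γ (z (φ q)) α μ β * deriv z (φ q) μ *
        deriv z (φ q) β) * deriv φ q ^ 2 := by
    simp only [Finset.sum_mul]
    exact Finset.sum_congr rfl fun _ _ => Finset.sum_congr rfl fun _ _ => by ring
  have hparφ := hpar _ ht α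
  rw [hz''.deriv] at hparφ
  rw [hw''.deriv]
  simp only [hw', hquad]
  linear_combination deriv φ q ^ 2 * hparφ

/-- If a curve `z` satisfies `δż/dt = a(t) ż` (its tangential
direction is transferred parallelly), then `z` is a geodesic up to
reparametrization: there is an open interval `J` and an orientation-preserving
twice differentiable change of parameter `φ : J → I` such that `w = z ∘ φ`
satisfies the geodesic equation. -/
theorem stmt_13 {N : ℕ} (U : Set (Fin N → ℝ)) (hUopen : IsOpen U)
    (Γ : (Fin N → ℝ) → Fin N → Fin N → Fin N → ℝ)   -- Γ z α λ β = Γ^α_{λβ}(z)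
    (hΓcont : ∀ α μ β, ContinuousOn (fun z => Γ z α μ β) U)
    (I : Set ℝ) (hIopen : IsOpen I) (hIconn : IsPreconnected I)  -- open interval
    (z : ℝ → Fin N → ℝ)
    (hz1 : ∀ t ∈ I, DifferentiableAt ℝ z t)
    (hz2 : ∀ t ∈ I, DifferentiableAt ℝ (deriv z) t)
    (hmem : ∀ t ∈ I, z t ∈ U)
    (a : ℝ → ℝ) (ha : ContinuousOn a I)
    (hpar : ∀ t ∈ I, ∀ α, deriv (fun s => deriv z s α) t
      + ∑ μ, ∑ β, Γ (z t) α μ β * deriv z t μ * deriv z t β = a t * deriv z t α) :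
    ∃ (J : Set ℝ) (φ : ℝ → ℝ), IsOpen J ∧ IsPreconnected J ∧
      Set.BijOn φ J I ∧
      (∀ q ∈ J, DifferentiableAt ℝ φ q ∧ DifferentiableAt ℝ (deriv φ) q ∧ 0 < deriv φ q) ∧
      (∀ q ∈ J, ∀ α,
        deriv (fun s => deriv (fun r => z (φ r) α) s) q
          + ∑ μ, ∑ β, Γ (z (φ q)) α μ β * deriv (fun r => z (φ r) μ) q *
              deriv (fun r => z (φ r) β) q = 0) :=
  stmt_13_general Γ I hIopen hIconn z hz1 hz2 a ha hpar
end

section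
/- Let N = 2n, let F ∈ Matrix (Fin N) (Fin N) ℝ be the standard semitangential structure (F e_k = e_{n+k} for 0 ≤ k < n, F e_{n+k} = 0), and let Γ^α_{λβ} : U → ℝ be continuous connection coefficients on an open set U ⊆ ℝ^N that are pure toward F (∑_λ Γ^α_{σλ} F^λ_β = ∑_ν Γ^ν_{σβ} F^α_ν on U). Fix c ∈ ℝ and a twice differentiable curve u ↦ z(u) ∈ ℝ^n, and let β(u) = (z(u), c·z'(u)) ∈ ℝ^{2n} be the corresponding u-line of the holomorphic surface S^H, assumed to lie in U and satisfy the geodesic equation β̈^α + ∑ Γ^α_{λβ}(β) β̇^λ β̇^β = 0. Then the vector field γ̇ := F β̇ along β (the velocity of the v-lines) is parallel along β: d/du (F β̇)^α + ∑_{λ,ν} Γ^α_{λν}(β) β̇^λ (F β̇)^ν = 0, and consequently β is a PH-curve for the connection Γ. -/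
/-!
Differentiating `(F β̇)^α = ∑ ρ F^α_ρ β̇^ρ` only involves the components `β̇^ρ = z'^ρ` with
`ρ < n`, so `d/du (F β̇) = F β̈` even though the upper half `c z''` of `β̇` need not be
differentiable. The geodesic equation turns `F β̈` into `-F Γ(β̇, β̇)`, and purity of `Γ` moves
`F` inside: `F Γ(β̇, β̇) = Γ(β̇, F β̇)`. This is the parallelism of `F β̇`; the PH-curve equation
then holds with `a = b = 0`.
-/

open Finset Matrix

/-- `g α σ μ` stands for `Γ^α_{σμ}`. -/
def IsPure {ι : Type*} [Fintype ι] (F : Matrix ι ι ℝ) (g : ι → ι → ι → ℝ) : Prop :=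
  ∀ σ α β, ∑ μ, g α σ μ * F μ β = ∑ ν, g ν σ β * F α ν

theorem IsPure.sum_mul_mulVec {ι : Type*} [Fintype ι] {F : Matrix ι ι ℝ} {g : ι → ι → ι → ℝ}
    (h : IsPure F g) (b : ι → ℝ) (α : ι) :
    ∑ μ, ∑ ν, g α μ ν * b μ * (F *ᵥ b) ν = ∑ ρ, F α ρ * ∑ μ, ∑ ν, g ρ μ ν * b μ * b ν := by
  calc ∑ μ, ∑ ν, g α μ ν * b μ * (F *ᵥ b) ν
      = ∑ μ, ∑ l, (∑ ν, g α μ ν * F ν l) * (b μ * b l) := by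
        simp only [mulVec, dotProduct, mul_sum, sum_mul]
        refine sum_congr rfl fun μ _ => sum_comm.trans (sum_congr rfl fun l _ =>
          sum_congr rfl fun ν _ => by ring)
    _ = ∑ μ, ∑ l, (∑ ρ, g ρ μ l * F α ρ) * (b μ * b l) := by simp only [h _ α]
    _ = ∑ ρ, F α ρ * ∑ μ, ∑ ν, g ρ μ ν * b μ * b ν := by
        simp only [mul_sum, sum_mul]
        rw [sum_congr rfl fun μ _ => sum_comm, sum_comm]
        exact sum_congr rfl fun ρ _ => sum_congr rfl fun μ _ => sum_congr rfl fun l _ => by ring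

theorem deriv_mulVec_apply {κ ι : Type*} [Fintype ι] (F : Matrix κ ι ℝ) {f : ℝ → ι → ℝ}
    {u : ℝ} (α : κ) (hf : ∀ ρ, F α ρ ≠ 0 → DifferentiableAt ℝ (fun s => f s ρ) u) :
    deriv (fun s => (F *ᵥ f s) α) u = ∑ ρ, F α ρ * deriv (fun s => f s ρ) u := by
  refine HasDerivAt.deriv (HasDerivAt.fun_sum fun ρ _ => ?_)
  by_cases hρ : F α ρ = 0
  · simpa [hρ] using hasDerivAt_const u (0 : ℝ)
  · exact (hf ρ hρ).hasDerivAt.const_mul _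

theorem deriv_apply_of_differentiableAt {ι : Type*} [Fintype ι] {φ : ℝ → ι → ℝ} {x : ℝ}
    (h : DifferentiableAt ℝ φ x) (i : ι) : deriv (fun s => φ s i) x = deriv φ x i := by
  rw [deriv_pi (differentiableAt_pi.1 h)]

def semitangential (n : ℕ) : Matrix (Fin (2 * n)) (Fin (2 * n)) ℝ :=
  Matrix.of fun i j => if (i : ℕ) = (j : ℕ) + n ∧ (j : ℕ) < n then 1 else 0

theorem lt_of_semitangential_apply_ne_zero {n : ℕ} {i j : Fin (2 * n)}
    (h : semitangential n i j ≠ 0) : (j : ℕ) < n := by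
  by_contra hj
  simp [semitangential, hj] at h

/-- The `u`-line `v = c` of the holomorphic surface `S^H` over `z`. -/
noncomputable def uLine {n : ℕ} (c : ℝ) (z : ℝ → Fin n → ℝ) (u : ℝ) (i : Fin (2 * n)) : ℝ :=
  if h : (i : ℕ) < n then z u ⟨i, h⟩
  else c * deriv (fun s => z s ⟨(i : ℕ) - n, by have := i.isLt; omega⟩) u

section uLine

variable {n : ℕ} {c : ℝ} {z : ℝ → Fin n → ℝ}

theorem differentiable_uLine (hz1 : Differentiable ℝ z) (hz2 : Differentiable ℝ (deriv z)) :
    Differentiable ℝ (uLine c z) := by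
  refine differentiable_pi.2 fun i => ?_
  by_cases hi : (i : ℕ) < n
  · simpa [uLine, hi] using differentiable_pi.1 hz1 ⟨i, hi⟩
  · simp only [uLine, hi, dite_false, deriv_apply_of_differentiableAt (hz1 _)]
    exact (differentiable_pi.1 hz2 _).const_mul c

theorem differentiableAt_deriv_uLine_apply (hz1 : Differentiable ℝ z)
    (hz2 : Differentiable ℝ (deriv z)) {i : Fin (2 * n)} (hi : (i : ℕ) < n) (u : ℝ) :
    DifferentiableAt ℝ (fun s => deriv (uLine c z) s i) u := by
  have hlower : (fun s => deriv (uLine c z) s i) = fun s => deriv z s ⟨i, hi⟩ := by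
    funext s
    rw [← deriv_apply_of_differentiableAt (differentiable_uLine hz1 hz2 s),
      ← deriv_apply_of_differentiableAt (hz1 s)]
    simp [uLine, hi]
  rw [hlower]
  exact differentiable_pi.1 hz2 _ u

end uLine

/-- Let `F` be the standard semitangential structure on `ℝ^{2n}`
and `Γ` connection coefficients pure toward `F`.  If the `u`-line
`β(u) = (z(u), c·z'(u))` of the holomorphic surface `S^H` is a geodesic, then the
velocity field `γ̇ = F β̇` of the `v`-lines is parallel along `β`, and consequently
`β` is a PH-curve for `Γ`. -/
theorem stmt_15 (n : ℕ) {U : Set (Fin (2 * n) → ℝ)}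
    (F : Matrix (Fin (2 * n)) (Fin (2 * n)) ℝ)
    (hF : ∀ i j, F i j = if (i : ℕ) = (j : ℕ) + n ∧ (j : ℕ) < n then 1 else 0)
    (Γ : (Fin (2 * n) → ℝ) → Fin (2 * n) → Fin (2 * n) → Fin (2 * n) → ℝ)
    (hpure : ∀ z ∈ U, ∀ σ α β,
      ∑ μ, Γ z α σ μ * F μ β = ∑ ν, Γ z ν σ β * F α ν)
    (c : ℝ) (z : ℝ → Fin n → ℝ)
    (hz1 : Differentiable ℝ z) (hz2 : Differentiable ℝ (deriv z))
    (β : ℝ → Fin (2 * n) → ℝ)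
    (hβ : ∀ (u : ℝ) (i : Fin (2 * n)), β u i =
      if h : (i : ℕ) < n then z u ⟨i, h⟩
      else c * deriv (fun s => z s ⟨(i : ℕ) - n, by omega⟩) u)
    (hmem : ∀ u : ℝ, β u ∈ U)
    (hgeo : ∀ (u : ℝ) (α : Fin (2 * n)), deriv (fun s => deriv β s α) u
      + ∑ μ, ∑ ν, Γ (β u) α μ ν * deriv β u μ * deriv β u ν = 0) :
    (∀ (u : ℝ) (α : Fin (2 * n)),
      deriv (fun s => F.mulVec (deriv β s) α) u
        + ∑ μ, ∑ ν, Γ (β u) α μ ν * deriv β u μ * F.mulVec (deriv β u) ν = 0) ∧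
    (∃ a b : ℝ → ℝ, ∀ (u : ℝ) (α : Fin (2 * n)),
      deriv (fun s => deriv β s α) u
        + ∑ μ, ∑ ν, Γ (β u) α μ ν * deriv β u μ * deriv β u ν
      = a u * deriv β u α + b u * F.mulVec (deriv β u) α) := by
  obtain rfl : F = semitangential n := Matrix.ext hF
  obtain rfl : β = uLine c z := funext fun u => funext (hβ u)
  refine ⟨fun u α => ?_, ⟨0, 0, fun u α => by simpa using hgeo u α⟩⟩
  have hlower (ρ) (hρ : semitangential n α ρ ≠ 0) :
      DifferentiableAt ℝ (fun s => deriv (uLine c z) s ρ) u :=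
    differentiableAt_deriv_uLine_apply hz1 hz2 (lt_of_semitangential_apply_ne_zero hρ) u
  rw [deriv_mulVec_apply _ α hlower, IsPure.sum_mul_mulVec (hpure _ (hmem u)), ← sum_add_distrib]
  exact sum_eq_zero fun ρ _ => by rw [← mul_add, hgeo u ρ, mul_zero]
end

section
/- Let F ∈ Matrix (Fin N) (Fin N) ℝ with F * F = 0, and let q : U → (Fin N → ℝ) be a 1-form on an open set U ⊆ ℝ^N; set q̃_i = ∑_s q_s F^s_i. Define the affine deformation tensor T^α_{βγ} = δ^α_β q̃_γ + F^α_β q_γ + δ^α_γ q̃_β + F^α_γ q_β. Then at every point of U: (1) T is symmetric in its lower indices and pure toward F with respect to all indices, i.e. ∑_λ T^α_{βλ} F^λ_γ = ∑_λ T^α_{λγ} F^λ_β = ∑_λ T^λ_{βγ} F^α_λ (= F^α_β q̃_γ + F^α_γ q̃_β); and (2) if Γ^α_{βγ} are connection coefficients on U with respect to which F is covariantly constant (∑_λ Γ^α_{σλ} F^λ_β = ∑_ν Γ^ν_{σβ} F^α_ν), then F is also covariantly constant with respect to the deformed connection Γ̄^α_{βγ} = Γ^α_{βγ} + T^α_{βγ},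 which moreover has symmetric and pure coefficients whenever Γ does. -/
/-- For a nilpotent structure `F` (`F * F = 0`) and a 1-form `q`
with associated form `q̃_i = ∑_s q_s F^s_i`, the affine deformation tensor
`T^α_{βγ} = δ^α_β q̃_γ + F^α_β q_γ + δ^α_γ q̃_β + F^α_γ q_β` is symmetric in its
lower indices and pure toward `F` with respect to all indices (the contractions all
equal `F^α_β q̃_γ + F^α_γ q̃_β`); moreover, if `F` is covariantly constant with
respect to `Γ`, then it is covariantly constant with respect to the deformed
connection `Γ̄ = Γ + T`, which has symmetric and pure coefficients whenever `Γ`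
does. -/
theorem stmt_16 {N : ℕ} (U : Set (Fin N → ℝ)) (hUopen : IsOpen U)
    (F : Matrix (Fin N) (Fin N) ℝ) (hF : F * F = 0)
    (q : (Fin N → ℝ) → Fin N → ℝ)                    -- a 1-form on U
    (qt : (Fin N → ℝ) → Fin N → ℝ)
    (hqt : ∀ z i, qt z i = ∑ s, q z s * F s i)        -- q̃_i = ∑_s q_s F^s_i
    (T : (Fin N → ℝ) → Fin N → Fin N → Fin N → ℝ)    -- T z α β γ = T^α_{βγ}(z)
    (hT : ∀ z α β γ, T z α β γ =
      (if α = β then (1 : ℝ) else 0) * qt z γ + F α β * q z γ +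
      (if α = γ then (1 : ℝ) else 0) * qt z β + F α γ * q z β)
    (Γ : (Fin N → ℝ) → Fin N → Fin N → Fin N → ℝ) :  -- Γ z α β γ = Γ^α_{βγ}(z)
    -- (1) `T` is symmetric in its lower indices and pure with respect to all indices:
    (∀ z ∈ U, ∀ α β γ, T z α β γ = T z α γ β) ∧
    (∀ z ∈ U, ∀ α β γ,
      ∑ μ, T z α β μ * F μ γ = ∑ μ, T z α μ γ * F μ β ∧
      ∑ μ, T z α μ γ * F μ β = ∑ μ, T z μ β γ * F α μ ∧
      ∑ μ, T z α β μ * F μ γ = F α β * qt z γ + F α γ * qt z β) ∧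
    -- (2) covariant constancy of `F` is preserved by the deformation `Γ̄ = Γ + T`:
    ((∀ z ∈ U, ∀ σ α β,
        ∑ μ, Γ z α σ μ * F μ β = ∑ ν, Γ z ν σ β * F α ν) →
      (∀ z ∈ U, ∀ σ α β,
        ∑ μ, (Γ z α σ μ + T z α σ μ) * F μ β = ∑ ν, (Γ z ν σ β + T z ν σ β) * F α ν)) ∧
    -- `Γ̄` has symmetric coefficients whenever `Γ` does:
    ((∀ z ∈ U, ∀ α β γ, Γ z α β γ = Γ z α γ β) →
      (∀ z ∈ U, ∀ α β γ, Γ z α β γ + T z α β γ = Γ z α γ β + T z α γ β)) ∧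
    -- `Γ̄` has pure coefficients whenever `Γ` does:
    ((∀ z ∈ U, ∀ α β γ,
        ∑ μ, Γ z α β μ * F μ γ = ∑ μ, Γ z α μ γ * F μ β ∧
        ∑ μ, Γ z α μ γ * F μ β = ∑ μ, Γ z μ β γ * F α μ) →
      (∀ z ∈ U, ∀ α β γ,
        ∑ μ, (Γ z α β μ + T z α β μ) * F μ γ = ∑ μ, (Γ z α μ γ + T z α μ γ) * F μ β ∧
        ∑ μ, (Γ z α μ γ + T z α μ γ) * F μ β = ∑ μ, (Γ z μ β γ + T z μ β γ) * F α μ)) := by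

  have hF2 : ∀ i j, ∑ k, F i k * F k j = 0 := by
    intro i j
    have := congrFun (congrFun hF i) j
    simpa [Matrix.mul_apply] using this
  have hqtF : ∀ z γ, ∑ μ, qt z μ * F μ γ = 0 := by
    intro z γ
    simp only [hqt, Finset.sum_mul]
    rw [Finset.sum_comm]
    simp only [mul_assoc, ← Finset.mul_sum, hF2, mul_zero, Finset.sum_const_zero]
  have hdelL : ∀ (α : Fin N) (f : Fin N → ℝ),
      ∑ μ, (if α = μ then (1:ℝ) else 0) * f μ = f α := by
    intro α f
    simp [ite_mul, Finset.sum_ite_eq, Finset.mem_univ]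
  have key1 : ∀ z α β γ, ∑ μ, T z α β μ * F μ γ = F α β * qt z γ + F α γ * qt z β := by
    intro z α β γ
    simp only [hT, add_mul, Finset.sum_add_distrib]
    have e1 : ∑ μ, (if α = β then (1:ℝ) else 0) * qt z μ * F μ γ = 0 := by
      by_cases hb : α = β <;> simp [hb, mul_assoc, ← Finset.mul_sum, hqtF z γ]
    have e2 : ∑ μ, F α β * q z μ * F μ γ = F α β * qt z γ := by
      simp only [mul_assoc, ← Finset.mul_sum, ← hqt]
    have e3 : ∑ μ, (if α = μ then (1:ℝ) else 0) * qt z β * F μ γ = qt z β * F α γ := by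
      have := hdelL α (fun μ => qt z β * F μ γ)
      simpa [mul_assoc] using this
    have e4 : ∑ μ, F α μ * q z β * F μ γ = 0 := by
      have : ∑ μ, F α μ * q z β * F μ γ = q z β * ∑ μ, F α μ * F μ γ := by
        rw [Finset.mul_sum]; exact Finset.sum_congr rfl fun μ _ => by ring
      rw [this, hF2, mul_zero]
    rw [e1, e2, e3, e4]; ring
  have key2 : ∀ z α β γ, ∑ μ, T z α μ γ * F μ β = F α β * qt z γ + F α γ * qt z β := by
    intro z α β γ
    simp only [hT, add_mul, Finset.sum_add_distrib]
    have e1 : ∑ μ, (if α = μ then (1:ℝ) else 0) * qt z γ * F μ β = qt z γ * F α β := by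
      have := hdelL α (fun μ => qt z γ * F μ β)
      simpa [mul_assoc] using this
    have e2 : ∑ μ, F α μ * q z γ * F μ β = 0 := by
      have : ∑ μ, F α μ * q z γ * F μ β = q z γ * ∑ μ, F α μ * F μ β := by
        rw [Finset.mul_sum]; exact Finset.sum_congr rfl fun μ _ => by ring
      rw [this, hF2, mul_zero]
    have e3 : ∑ μ, (if α = γ then (1:ℝ) else 0) * qt z μ * F μ β = 0 := by
      by_cases hb : α = γ <;> simp [hb, mul_assoc, ← Finset.mul_sum, hqtF z β]
    have e4 : ∑ μ, F α γ * q z μ * F μ β = F α γ * qt z β := by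
      simp only [mul_assoc, ← Finset.mul_sum, ← hqt]
    rw [e1, e2, e3, e4]; ring
  have key3 : ∀ z α β γ, ∑ μ, T z μ β γ * F α μ = F α β * qt z γ + F α γ * qt z β := by
    intro z α β γ
    simp only [hT, add_mul, Finset.sum_add_distrib]
    have e1 : ∑ μ, (if μ = β then (1:ℝ) else 0) * qt z γ * F α μ = qt z γ * F α β := by
      simp [ite_mul, Finset.sum_ite_eq', Finset.mem_univ]
    have e2 : ∑ μ, F μ β * q z γ * F α μ = 0 := by
      have : ∑ μ, F μ β * q z γ * F α μ = q z γ * ∑ μ, F α μ * F μ β := by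
        rw [Finset.mul_sum]; exact Finset.sum_congr rfl fun μ _ => by ring
      rw [this, hF2, mul_zero]
    have e3 : ∑ μ, (if μ = γ then (1:ℝ) else 0) * qt z β * F α μ = qt z β * F α γ := by
      simp [ite_mul, Finset.sum_ite_eq', Finset.mem_univ]
    have e4 : ∑ μ, F μ γ * q z β * F α μ = 0 := by
      have : ∑ μ, F μ γ * q z β * F α μ = q z β * ∑ μ, F α μ * F μ γ := by
        rw [Finset.mul_sum]; exact Finset.sum_congr rfl fun μ _ => by ring
      rw [this, hF2, mul_zero]
    rw [e1, e2, e3, e4]; ring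
  have hTsymm : ∀ z α β γ, T z α β γ = T z α γ β := by
    intro z α β γ; rw [hT, hT]; ring
  refine ⟨fun z _ α β γ => hTsymm z α β γ, ?_, ?_, ?_, ?_⟩
  · intro z _ α β γ
    refine ⟨by rw [key1, key2], by rw [key2, key3], key1 z α β γ⟩
  · intro h z hz σ α β
    simp only [add_mul, Finset.sum_add_distrib]
    rw [h z hz σ α β, key1, key3]
  · intro h z hz α β γ
    rw [h z hz α β γ, hTsymm]
  · intro h z hz α β γ
    obtain ⟨h1, h2⟩ := h z hz α β γ
    constructor
    · simp only [add_mul, Finset.sum_add_distrib, h1, key1, key2]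
    · simp only [add_mul, Finset.sum_add_distrib, h2, key2, key3]
end

section
/- Let F ∈ Matrix (Fin N) (Fin N) ℝ with F * F = 0, let U ⊆ ℝ^N be open, let Γ^α_{βγ} : U → ℝ be connection coefficients, let q : U → (Fin N → ℝ) be a 1-form with q̃_i = ∑_s q_s F^s_i, and let Γ̄^α_{βγ} = Γ^α_{βγ} + δ^α_β q̃_γ + F^α_β q_γ + δ^α_γ q̃_β + F^α_γ q_β be the deformed connection. If a twice differentiable curve x : I → U satisfies ẍ^α + ∑ Γ^α_{λβ}(x) ẋ^λ ẋ^β = a(t) ẋ^α + b(t) (F ẋ)^α for functions a, b : I → ℝ, then it satisfies ẍ^α + ∑ Γ̄^α_{λβ}(x) ẋ^λ ẋ^β = (a(t) + 2 q̃(ẋ)) ẋ^α + (b(t) + 2 q(ẋ)) (F ẋ)^α, where q(ẋ) = ∑_k q_k(x) ẋ^k and q̃(ẋ) = ∑_k q̃_k(x) ẋ^k. Consequently the connections Γ and Γ̄ have the same PH-curves. -/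
/-!
Contracting the deformation tensor `T` twice with `ẋ` gives
`2 q̃(ẋ) ẋ^α + 2 q(ẋ) (F ẋ)^α`, a combination of `ẋ` and `F ẋ` only. Adding such a term to the
quadratic part of the geodesic-type equation just shifts the coefficients `a` and `b`, so the
PH-equations of `Γ` and `Γ + T` are solved by the same curves.
-/

open Finset Matrix

section Deformation

variable {R ι : Type*} [CommRing R] [Fintype ι] [DecidableEq ι]

def affineDeformation (F : Matrix ι ι R) (q qt : ι → R) (α β γ : ι) : R :=
  (if α = β then 1 else 0) * qt γ + F α β * q γ + (if α = γ then 1 else 0) * qt β + F α γ * q β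

theorem affineDeformation_contract (F : Matrix ι ι R) (q qt v : ι → R) (α : ι) :
    ∑ μ, ∑ β, affineDeformation F q qt α μ β * v μ * v β
      = 2 * (qt ⬝ᵥ v) * v α + 2 * (q ⬝ᵥ v) * (F *ᵥ v) α := by
  simp only [affineDeformation, add_mul, sum_add_distrib, ite_mul, one_mul, zero_mul,
    sum_ite_eq, sum_ite_irrel, sum_const_zero, mem_univ, if_true]
  rw [sum_comm (f := fun μ β => F α β * q μ * v μ * v β)]
  simp only [mulVec, dotProduct, mul_sum, sum_mul, ← sum_add_distrib]
  refine sum_congr rfl fun μ _ => ?_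
  have hFq : ∑ β, F α μ * q β * v μ * v β + ∑ β, F α μ * q β * v β * v μ
      = ∑ β, 2 * (q β * v β) * (F α μ * v μ) := by
    rw [← sum_add_distrib]
    exact sum_congr rfl fun _ _ => by ring
  linear_combination hFq

end Deformation

section PHCurves

variable {ι : Type*} [Fintype ι]

def SolvesPHEquation (Γ : (ι → ℝ) → ι → ι → ι → ℝ) (F : Matrix ι ι ℝ) (I : Set ℝ)
    (x : ℝ → ι → ℝ) (a b : ℝ → ℝ) : Prop :=
  ∀ t ∈ I, ∀ α, deriv (fun s => deriv x s α) t
    + ∑ μ, ∑ β, Γ (x t) α μ β * deriv x t μ * deriv x t β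
    = a t * deriv x t α + b t * (F *ᵥ deriv x t) α

variable {Γ Γ' : (ι → ℝ) → ι → ι → ι → ℝ} {F : Matrix ι ι ℝ} {I : Set ℝ} {x : ℝ → ι → ℝ}
  {A B : (ι → ℝ) → (ι → ℝ) → ℝ}

theorem SolvesPHEquation.of_quadratic_eq
    (hΓ : ∀ z v α, ∑ μ, ∑ β, Γ' z α μ β * v μ * v β
      = ∑ μ, ∑ β, Γ z α μ β * v μ * v β + A z v * v α + B z v * (F *ᵥ v) α)
    {a b : ℝ → ℝ} (hx : SolvesPHEquation Γ F I x a b) :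
    SolvesPHEquation Γ' F I x (fun t => a t + A (x t) (deriv x t))
      (fun t => b t + B (x t) (deriv x t)) := by
  intro t ht α
  rw [hΓ, ← add_assoc, ← add_assoc, hx t ht α]
  ring

theorem exists_solvesPHEquation_iff_of_quadratic_eq
    (hΓ : ∀ z v α, ∑ μ, ∑ β, Γ' z α μ β * v μ * v β
      = ∑ μ, ∑ β, Γ z α μ β * v μ * v β + A z v * v α + B z v * (F *ᵥ v) α) :
    (∃ a b, SolvesPHEquation Γ F I x a b) ↔ (∃ a b, SolvesPHEquation Γ' F I x a b) := by
  have hΓ_symm : ∀ z v α, ∑ μ, ∑ β, Γ z α μ β * v μ * v β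
      = ∑ μ, ∑ β, Γ' z α μ β * v μ * v β + (-A z v) * v α + (-B z v) * (F *ᵥ v) α := by
    intro z v α
    rw [hΓ]
    ring
  exact ⟨fun ⟨_, _, hx⟩ => ⟨_, _, hx.of_quadratic_eq hΓ⟩,
    fun ⟨_, _, hx⟩ => ⟨_, _, hx.of_quadratic_eq hΓ_symm⟩⟩

end PHCurves

theorem stmt_17_general {N : ℕ}
    (F : Matrix (Fin N) (Fin N) ℝ)
    (Γ : (Fin N → ℝ) → Fin N → Fin N → Fin N → ℝ)   -- Γ z α β γ = Γ^α_{βγ}(z)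
    (q : (Fin N → ℝ) → Fin N → ℝ)                    -- a 1-form on U
    (qt : (Fin N → ℝ) → Fin N → ℝ)
    (T : (Fin N → ℝ) → Fin N → Fin N → Fin N → ℝ)
    (hT : ∀ z α β γ, T z α β γ =
      (if α = β then (1 : ℝ) else 0) * qt z γ + F α β * q z γ +
      (if α = γ then (1 : ℝ) else 0) * qt z β + F α γ * q z β)
    (I : Set ℝ) (x : ℝ → Fin N → ℝ)
    (a b : ℝ → ℝ)
    (hPH : ∀ t ∈ I, ∀ α, deriv (fun s => deriv x s α) t
      + ∑ μ, ∑ β, Γ (x t) α μ β * deriv x t μ * deriv x t β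
      = a t * deriv x t α + b t * F.mulVec (deriv x t) α) :
    (∀ t ∈ I, ∀ α, deriv (fun s => deriv x s α) t
      + ∑ μ, ∑ β, (Γ (x t) α μ β + T (x t) α μ β) * deriv x t μ * deriv x t β
      = (a t + 2 * ∑ k, qt (x t) k * deriv x t k) * deriv x t α
        + (b t + 2 * ∑ k, q (x t) k * deriv x t k) * F.mulVec (deriv x t) α) ∧
    ((∃ a' b' : ℝ → ℝ, ∀ t ∈ I, ∀ α, deriv (fun s => deriv x s α) t
        + ∑ μ, ∑ β, Γ (x t) α μ β * deriv x t μ * deriv x t β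
        = a' t * deriv x t α + b' t * F.mulVec (deriv x t) α) ↔
      (∃ a' b' : ℝ → ℝ, ∀ t ∈ I, ∀ α, deriv (fun s => deriv x s α) t
        + ∑ μ, ∑ β, (Γ (x t) α μ β + T (x t) α μ β) * deriv x t μ * deriv x t β
        = a' t * deriv x t α + b' t * F.mulVec (deriv x t) α)) := by
  obtain rfl : T = fun z => affineDeformation F (q z) (qt z) := by
    funext z α β γ
    exact hT z α β γ
  have hΓT : ∀ z v α,
      ∑ μ, ∑ β, (Γ z α μ β + affineDeformation F (q z) (qt z) α μ β) * v μ * v β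
        = ∑ μ, ∑ β, Γ z α μ β * v μ * v β
          + 2 * (qt z ⬝ᵥ v) * v α + 2 * (q z ⬝ᵥ v) * (F *ᵥ v) α := by
    intro z v α
    simp only [add_mul, sum_add_distrib, affineDeformation_contract, add_assoc]
  exact ⟨SolvesPHEquation.of_quadratic_eq hΓT hPH,
    exists_solvesPHEquation_iff_of_quadratic_eq hΓT⟩

/-- If a curve `x` satisfies
`δẋ/dt = a(t) ẋ + b(t) (F ẋ)` for the connection `Γ`, then for the deformed
connection `Γ̄ = Γ + T` (with `T^α_{βγ} = δ^α_β q̃_γ + F^α_β q_γ + δ^α_γ q̃_β + F^α_γ q_β`)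
it satisfies `δ̄ẋ/dt = (a + 2 q̃(ẋ)) ẋ + (b + 2 q(ẋ)) (F ẋ)`.  Consequently `Γ` and
`Γ̄` have the same PH-curves. -/
theorem stmt_17 {N : ℕ} (U : Set (Fin N → ℝ)) (hUopen : IsOpen U)
    (F : Matrix (Fin N) (Fin N) ℝ) (hF : F * F = 0)
    (Γ : (Fin N → ℝ) → Fin N → Fin N → Fin N → ℝ)   -- Γ z α β γ = Γ^α_{βγ}(z)
    (q : (Fin N → ℝ) → Fin N → ℝ)                    -- a 1-form on U
    (qt : (Fin N → ℝ) → Fin N → ℝ)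
    (hqt : ∀ z i, qt z i = ∑ s, q z s * F s i)        -- q̃_i = ∑_s q_s F^s_i
    (T : (Fin N → ℝ) → Fin N → Fin N → Fin N → ℝ)
    (hT : ∀ z α β γ, T z α β γ =
      (if α = β then (1 : ℝ) else 0) * qt z γ + F α β * q z γ +
      (if α = γ then (1 : ℝ) else 0) * qt z β + F α γ * q z β)
    (I : Set ℝ) (x : ℝ → Fin N → ℝ)
    (hx1 : ∀ t ∈ I, DifferentiableAt ℝ x t)
    (hx2 : ∀ t ∈ I, DifferentiableAt ℝ (deriv x) t)
    (hmem : ∀ t ∈ I, x t ∈ U)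
    (a b : ℝ → ℝ)
    (hPH : ∀ t ∈ I, ∀ α, deriv (fun s => deriv x s α) t
      + ∑ μ, ∑ β, Γ (x t) α μ β * deriv x t μ * deriv x t β
      = a t * deriv x t α + b t * F.mulVec (deriv x t) α) :
    (∀ t ∈ I, ∀ α, deriv (fun s => deriv x s α) t
      + ∑ μ, ∑ β, (Γ (x t) α μ β + T (x t) α μ β) * deriv x t μ * deriv x t β
      = (a t + 2 * ∑ k, qt (x t) k * deriv x t k) * deriv x t α
        + (b t + 2 * ∑ k, q (x t) k * deriv x t k) * F.mulVec (deriv x t) α) ∧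
    ((∃ a' b' : ℝ → ℝ, ∀ t ∈ I, ∀ α, deriv (fun s => deriv x s α) t
        + ∑ μ, ∑ β, Γ (x t) α μ β * deriv x t μ * deriv x t β
        = a' t * deriv x t α + b' t * F.mulVec (deriv x t) α) ↔
      (∃ a' b' : ℝ → ℝ, ∀ t ∈ I, ∀ α, deriv (fun s => deriv x s α) t
        + ∑ μ, ∑ β, (Γ (x t) α μ β + T (x t) α μ β) * deriv x t μ * deriv x t β
        = a' t * deriv x t α + b' t * F.mulVec (deriv x t) α)) :=
  stmt_17_general F Γ q qt T hT I x a b hPH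
end
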